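/- arXiv:2602.15548 — 11 statements merged into one kernel-verified Lean document; each statement's English description precedes it below -/
import Mathlib

section
/- Let F : ℝ × ℝ → ℝ be translative, i.e., F(x+z, y+z) = F(x,y) + z for all x,y,z ∈ ℝ, and define f(x) := F(x,0). Then F is weakly associative (F(F(x,y),x) = F(x,F(y,x)) for all x,y ∈ ℝ) if and only if f satisfies f(f(-x)+x) = f(-f(x)) + f(x) for all x ∈ ℝ. -/
/-!
A translative operation is determined by its section `f x = F (x, 0)`, namely
`F (a, b) = f (a - b) + b`. Rewriting both sides of `F (F (x, y), x) = F (x, F (y, x))` in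
these terms, each becomes `x` plus an expression in `t = y - x` alone, and cancelling `x` leaves
exactly `f (f (-t) + t) = f (-f t) + f t`.
-/

section Translative

variable {G : Type*} [AddCommGroup G] {F : G × G → G}

theorem translative_apply_eq_section_add (htr : ∀ x y z, F (x + z, y + z) = F (x, y) + z)
    (a b : G) : F (a, b) = F (a - b, 0) + b := by
  simpa using htr (a - b) 0 b

theorem translative_weakAssoc_at_iff (htr : ∀ x y z, F (x + z, y + z) = F (x, y) + z)
    {f : G → G} (hf : ∀ x, f x = F (x, 0)) (x y : G) :
    F (F (x, y), x) = F (x, F (y, x)) ↔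
      f (f (-(y - x)) + (y - x)) = f (-f (y - x)) + f (y - x) := by
  have hF : ∀ a b, F (a, b) = f (a - b) + b := fun a b => by
    rw [hf, translative_apply_eq_section_add htr]
  have hleft : f (x - y) + y - x = f (-(y - x)) + (y - x) := by
    rw [neg_sub]; abel
  have hright : x - (f (y - x) + x) = -f (y - x) := by abel
  simp only [hF]
  rw [hleft, hright, ← add_assoc, add_left_inj]

end Translative

theorem stmt1 (F : ℝ × ℝ → ℝ) (htr : ∀ x y z : ℝ, F (x + z, y + z) = F (x, y) + z)
    (f : ℝ → ℝ) (hf : ∀ x, f x = F (x, 0)) :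
    (∀ x y : ℝ, F (F (x, y), x) = F (x, F (y, x))) ↔
      (∀ x : ℝ, f (f (-x) + x) = f (-f x) + f x) := by
  refine ⟨fun h t => ?_, fun h x y => (translative_weakAssoc_at_iff htr hf x y).2 (h (y - x))⟩
  simpa using (translative_weakAssoc_at_iff htr hf 0 t).1 (h 0 t)
end

section
/- Let a ∈ ℝ and f : ℝ → ℝ with f(x) = a·x for x ≤ 0 and 0 ≤ f(x) ≤ x for x ≥ 0. If f satisfies f(f(-x)+x) = f(-f(x)) + f(x) for all x ∈ ℝ, then f(a·x) = a·f(x) for all x ≥ 0. -/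
theorem stmt5 (a : ℝ) (f : ℝ → ℝ) (hneg : ∀ x : ℝ, x ≤ 0 → f x = a * x)
    (hpos : ∀ x : ℝ, 0 ≤ x → 0 ≤ f x ∧ f x ≤ x)
    (hfe : ∀ x : ℝ, f (f (-x) + x) = f (-f x) + f x) :
    ∀ x : ℝ, 0 ≤ x → f (a * x) = a * f x := by
  intro x hx
  have hfx_sub_nonpos : f x + -x ≤ 0 := by linarith [(hpos x hx).2]
  -- At `-x` both `f x - x` and `-x` lie in the linear region `(-∞, 0]`.
  have key := hfe (-x)
  rw [neg_neg, hneg _ hfx_sub_nonpos, hneg (-x) (by linarith), mul_neg, neg_neg] at key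
  linarith
end

section
/- Let a ∈ ℝ and f : ℝ → ℝ with f(x) = a·x for x ≤ 0 and 0 ≤ f(x) ≤ x for x ≥ 0. If f satisfies f(f(-x)+x) = f(-f(x)) + f(x) for all x ∈ ℝ, then f((1-a)·x) = (1-a)·f(x) for all x ≥ 0. -/
theorem stmt6 (a : ℝ) (f : ℝ → ℝ) (hneg : ∀ x : ℝ, x ≤ 0 → f x = a * x)
    (hpos : ∀ x : ℝ, 0 ≤ x → 0 ≤ f x ∧ f x ≤ x)
    (hfe : ∀ x : ℝ, f (f (-x) + x) = f (-f x) + f x) :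
    ∀ x : ℝ, 0 ≤ x → f ((1 - a) * x) = (1 - a) * f x := by
  intro x hx
  have hfx : 0 ≤ f x := (hpos x hx).1
  calc f ((1 - a) * x) = f (f (-x) + x) := by
        rw [hneg (-x) (neg_nonpos.mpr hx)]
        ring_nf
    _ = f (-f x) + f x := hfe x
    _ = (1 - a) * f x := by
        rw [hneg (-f x) (neg_nonpos.mpr hfx)]
        ring
end

section
/- Let a ∈ ℝ and f : ℝ → ℝ with f(x) = a·x for x ≤ 0 and 0 ≤ f(x) ≤ x for x ≥ 0. If f(a·x) = a·f(x) and f((1-a)·x) = (1-a)·f(x) hold for all x ≥ 0, then f satisfies f(f(-x)+x) = f(-f(x)) + f(x) for all x ∈ ℝ. -/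
/-! On `x ≥ 0` the argument `f (-x) + x` is `(1 - a) * x` and `-f x ≤ 0`, so the equation is
`(1 - a)`-homogeneity at `x`. On `x < 0` the bound `f (-x) ≤ -x` puts `f (-x) + x` on the linear
branch, and `-f x = a * (-x)`, so the equation is `a`-homogeneity at `-x`. -/

theorem apply_apply_neg_add_of_nonneg {a : ℝ} {f : ℝ → ℝ} (hneg : ∀ x ≤ 0, f x = a * x)
    {x : ℝ} (hx : 0 ≤ x) (hfx : 0 ≤ f x) (h1a : f ((1 - a) * x) = (1 - a) * f x) :
    f (f (-x) + x) = f (-f x) + f x := by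
  have hfnx : f (-x) + x = (1 - a) * x := by rw [hneg (-x) (by linarith)]; ring
  rw [hfnx, h1a, hneg (-f x) (by linarith)]
  ring

theorem apply_apply_neg_add_of_neg {a : ℝ} {f : ℝ → ℝ} (hneg : ∀ x ≤ 0, f x = a * x)
    {x : ℝ} (hx : x < 0) (hfnx : f (-x) ≤ -x) (ha : f (a * -x) = a * f (-x)) :
    f (f (-x) + x) = f (-f x) + f x := by
  have hfx : -f x = a * -x := by rw [hneg x hx.le]; ring
  rw [hneg _ (by linarith), hfx, ha, hneg x hx.le]
  ring

theorem stmt7 (a : ℝ) (f : ℝ → ℝ) (hneg : ∀ x : ℝ, x ≤ 0 → f x = a * x)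
    (hpos : ∀ x : ℝ, 0 ≤ x → 0 ≤ f x ∧ f x ≤ x)
    (ha : ∀ x : ℝ, 0 ≤ x → f (a * x) = a * f x)
    (h1a : ∀ x : ℝ, 0 ≤ x → f ((1 - a) * x) = (1 - a) * f x) :
    ∀ x : ℝ, f (f (-x) + x) = f (-f x) + f x := by
  intro x
  rcases le_or_gt 0 x with hx | hx
  · exact apply_apply_neg_add_of_nonneg hneg hx (hpos x hx).1 (h1a x hx)
  · have hnx : 0 ≤ -x := by linarith
    exact apply_apply_neg_add_of_neg hneg hx (hpos (-x) hnx).2 (ha (-x) hnx)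
end

section
/- Let g : ℝ → ℝ satisfy min(x,0) ≤ g(x) ≤ max(x,0) for all x ∈ ℝ. Define f : ℝ → ℝ by f(x) = 0 for x ≤ 0 and f(x) = g(x) for x > 0. Then f satisfies f(f(-x)+x) = f(-f(x)) + f(x) for all x ∈ ℝ. -/
/-! Such an `f` satisfies `0 ≤ f x ≤ max x 0`, so it vanishes on `(-∞, 0]`. For `x ≤ 0` both sides
vanish, because `f (-x) + x ≤ 0`; for `x > 0` both sides equal `f x`, because `-x` and `-f x`
are nonpositive. -/

lemma eq_zero_of_nonpos_of_le_max {f : ℝ → ℝ} (hf : ∀ x, 0 ≤ f x ∧ f x ≤ max x 0) {x : ℝ}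
    (hx : x ≤ 0) : f x = 0 :=
  le_antisymm ((hf x).2.trans_eq (max_eq_right hx)) (hf x).1

theorem map_map_neg_add_eq_of_le_max {f : ℝ → ℝ} (hf : ∀ x, 0 ≤ f x ∧ f x ≤ max x 0) (x : ℝ) :
    f (f (-x) + x) = f (-f x) + f x := by
  have hzero : ∀ {y}, y ≤ 0 → f y = 0 := eq_zero_of_nonpos_of_le_max hf
  rcases le_or_gt x 0 with hx | hx
  · have hle : f (-x) ≤ -x := (hf (-x)).2.trans_eq (max_eq_left (by linarith))
    rw [hzero (by linarith : f (-x) + x ≤ 0), hzero hx, neg_zero, hzero le_rfl, add_zero]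
  · rw [hzero (by linarith : -x ≤ 0), zero_add, hzero (neg_nonpos.mpr (hf x).1), zero_add]

theorem stmt8 (g : ℝ → ℝ) (hbt : ∀ x : ℝ, min x 0 ≤ g x ∧ g x ≤ max x 0)
    (f : ℝ → ℝ) (hf : ∀ x : ℝ, f x = if x ≤ 0 then 0 else g x) :
    ∀ x : ℝ, f (f (-x) + x) = f (-f x) + f x := by
  refine map_map_neg_add_eq_of_le_max fun x ↦ ?_
  rw [hf x]
  split_ifs with hx
  · exact ⟨le_rfl, le_max_right x 0⟩
  · have hx : 0 < x := not_le.mp hx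
    simpa [min_eq_right hx.le] using hbt x
end

section
/- Let g : ℝ → ℝ satisfy min(x,0) ≤ g(x) ≤ max(x,0) for all x ∈ ℝ and be continuous on [0,∞). Then the function f defined by f(x) = 0 for x ≤ 0 and f(x) = g(x) for x > 0 is continuous on ℝ and satisfies f(f(-x)+x) = f(-f(x)) + f(x) for all x ∈ ℝ. -/
/-!
The truncation `f` is `g ∘ (max · 0)`, hence continuous, and it lies between `0` and `max x 0`.
Any such `f` vanishes on `(-∞, 0]`, so `f (-f x) = 0`, and of `f (-x)` and `f x` at least one
is `0`: for `x > 0` both sides equal `f x`, while for `x ≤ 0` we get `f (-x) + x ≤ 0`.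
-/

lemma eq_zero_of_nonneg_of_le_max {f : ℝ → ℝ} (h0 : ∀ x, 0 ≤ f x) (h1 : ∀ x, f x ≤ max x 0)
    {x : ℝ} (hx : x ≤ 0) : f x = 0 :=
  le_antisymm (max_eq_right hx ▸ h1 x) (h0 x)

lemma funEq_of_nonneg_of_le_max {f : ℝ → ℝ} (h0 : ∀ x, 0 ≤ f x) (h1 : ∀ x, f x ≤ max x 0)
    (x : ℝ) : f (f (-x) + x) = f (-f x) + f x := by
  have hzero := @eq_zero_of_nonneg_of_le_max f h0 h1
  rw [hzero (neg_nonpos.mpr (h0 x)), zero_add]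
  rcases le_or_gt x 0 with hx | hx
  · have hsum : f (-x) + x ≤ 0 := by
      have := h1 (-x)
      rw [max_eq_left (neg_nonneg.mpr hx)] at this
      linarith
    rw [hzero hsum, hzero hx]
  · rw [hzero (neg_nonpos.mpr hx.le), zero_add]

lemma eq_zero_of_bowTie {g : ℝ → ℝ} (hbt : ∀ x : ℝ, min x 0 ≤ g x ∧ g x ≤ max x 0) : g 0 = 0 := by
  have h := hbt 0
  simp only [min_self, max_self] at h
  exact le_antisymm h.2 h.1

theorem stmt10 (g : ℝ → ℝ) (hbt : ∀ x : ℝ, min x 0 ≤ g x ∧ g x ≤ max x 0)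
    (hcont : ContinuousOn g (Set.Ici (0 : ℝ)))
    (f : ℝ → ℝ) (hf : ∀ x : ℝ, f x = if x ≤ 0 then 0 else g x) :
    Continuous f ∧ ∀ x : ℝ, f (f (-x) + x) = f (-f x) + f x := by
  have hfg : f = g ∘ fun x => max x 0 := by
    funext x
    rcases le_or_gt x 0 with hx | hx
    · simp [hf, hx, eq_zero_of_bowTie hbt]
    · simp [hf, hx.not_ge, hx.le]
  have hnonneg : ∀ x, 0 ≤ f x := fun x => by
    simpa [hfg] using (hbt (max x 0)).1
  have hle_max : ∀ x, f x ≤ max x 0 := fun x => by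
    simpa [hfg] using (hbt (max x 0)).2
  refine ⟨?_, funEq_of_nonneg_of_le_max hnonneg hle_max⟩
  rw [hfg]
  exact hcont.comp_continuous (continuous_id.max continuous_const) fun x => le_max_right x 0
end

section
/- There exists a continuous function f : ℝ → ℝ satisfying f(f(-x)+x) = f(-f(x)) + f(x) for all x ∈ ℝ that is not of the form f(x) = a·x for x ≤ 0 and f(x) = b·x for x > 0 for any constants a, b ∈ ℝ. (Hence Matkowski's conjecture on the continuous solutions of this equation is false.) -/
/-! The truncation `f x = max x (-1)` is a counterexample: both sides of the equation equal
`max 0 (x - 1)`, while `f` is constant on `[-2, -1]` and so not linear on `(-∞, 0]`. -/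

theorem max_neg_one_functional_equation (x : ℝ) :
    max (max (-x) (-1) + x) (-1) = max (-max x (-1)) (-1) + max x (-1) := by
  simp only [max_def]
  split_ifs <;> linarith

theorem not_exists_linear_max_neg_one_on_Iic :
    ¬ ∃ a : ℝ, ∀ x : ℝ, x ≤ 0 → max x (-1) = a * x := by
  rintro ⟨a, ha⟩
  have at_neg_one : max (-1 : ℝ) (-1) = a * -1 := ha (-1) (by norm_num)
  have at_neg_two : max (-2 : ℝ) (-1) = a * -2 := ha (-2) (by norm_num)
  norm_num at at_neg_one at_neg_two
  linarith

theorem stmt11 : ∃ f : ℝ → ℝ, Continuous f ∧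
    (∀ x : ℝ, f (f (-x) + x) = f (-f x) + f x) ∧
    ¬ ∃ a b : ℝ, (∀ x : ℝ, x ≤ 0 → f x = a * x) ∧ (∀ x : ℝ, 0 < x → f x = b * x) := by
  refine ⟨fun x => max x (-1), continuous_id.max continuous_const,
    max_neg_one_functional_equation, ?_⟩
  rintro ⟨a, -, hneg, -⟩
  exact not_exists_linear_max_neg_one_on_Iic ⟨a, hneg⟩
end

section
/- Let γ ≠ 0, λ ∈ ℝ \ {0}, and suppose ln|λ| = k·γ for some integer k. Let h : ℝ → ℝ be periodic with period γ. Define g : ℝ → ℝ by g(x) = x·h(ln|x|) for x ≠ 0 and g(0) = 0. Then g(λ·x) = λ·g(x) for all x ∈ ℝ. -/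
open Real Function

lemma Function.Periodic.mul_comp_log_abs_mul {h : ℝ → ℝ} {c : ℝ} (hper : Periodic h c)
    {lam : ℝ} (hlam : lam ≠ 0) {k : ℤ} (hk : log |lam| = k * c) {x : ℝ} (hx : x ≠ 0) :
    lam * x * h (log |lam * x|) = lam * (x * h (log |x|)) := by
  have hlog : log |lam * x| = log |x| + k * c := by
    rw [abs_mul, log_mul (abs_ne_zero.2 hlam) (abs_ne_zero.2 hx), hk, add_comm]
  rw [hlog, hper.int_mul k, mul_assoc]

theorem stmt15_general (γ : ℝ) (lam : ℝ) (hlam : lam ≠ 0)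
    (k : ℤ) (hk : Real.log |lam| = k * γ)
    (h : ℝ → ℝ) (hper : Function.Periodic h γ)
    (g : ℝ → ℝ) (hg : ∀ x : ℝ, g x = if x = 0 then 0 else x * h (Real.log |x|)) :
    ∀ x : ℝ, g (lam * x) = lam * g x := by
  intro x
  rcases eq_or_ne x 0 with rfl | hx
  · simp [hg]
  · rw [hg, hg, if_neg (mul_ne_zero hlam hx), if_neg hx]
    exact hper.mul_comp_log_abs_mul hlam hk hx

theorem stmt15 (γ : ℝ) (hγ : γ ≠ 0) (lam : ℝ) (hlam : lam ≠ 0)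
    (k : ℤ) (hk : Real.log |lam| = k * γ)
    (h : ℝ → ℝ) (hper : Function.Periodic h γ)
    (g : ℝ → ℝ) (hg : ∀ x : ℝ, g x = if x = 0 then 0 else x * h (Real.log |x|)) :
    ∀ x : ℝ, g (lam * x) = lam * g x :=
  stmt15_general γ lam hlam k hk h hper g hg
end

section
/- Let a ∈ (0,1) with ln a / ln(1-a) rational. Then there exists a continuous function f : ℝ → ℝ satisfying f(f(-x)+x) = f(-f(x)) + f(x) for all x ∈ ℝ, satisfying the bow-tie condition min(x,0) ≤ f(x) ≤ max(x,0), with f(x) = a·x for all x ≤ 0, such that f is not linear on [0,∞), i.e., there is no b ∈ ℝ with f(x) = b·x for all x ≥ 0. -/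
/-!
Write `log a / log (1 - a) = m / n` with integers `m, n`, so that `log a = m L` and
`log (1 - a) = n L` for `L = log (1 - a) / n`. Take `f x = a x` for `x ≤ 0` and `f x = x h(x)` for
`x > 0`, where `h(x) = (2 + sin (2π log x / L)) / 4` is invariant under `x ↦ e^L x`, hence under
multiplication by `a` and by `1 - a`. Then `f` commutes with these two scalings on `(0, ∞)`, which is
all the functional equation needs, and `h` takes values in `[1/4, 3/4]`, which gives the bow-tie
condition. Since `h` is not constant, `f` is not linear on `[0, ∞)`.
-/

open Real Set

theorem exists_int_mul_eq_of_div_eq_rat {s t : ℝ} (ht : t ≠ 0) (q : ℚ) (h : s / t = q) :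
    ∃ L ≠ (0 : ℝ), ∃ m n : ℤ, s = m * L ∧ t = n * L := by
  have hden : (q.den : ℝ) ≠ 0 := by exact_mod_cast q.den_ne_zero
  refine ⟨t / q.den, div_ne_zero ht hden, q.num, q.den, ?_, ?_⟩
  · rw [div_eq_iff ht, Rat.cast_def] at h
    rw [h]
    field_simp
  · push_cast
    field_simp

theorem funEq_of_map_mul_eq {a : ℝ} {f : ℝ → ℝ} (hneg : ∀ x ≤ 0, f x = a * x)
    (hpos : ∀ x, 0 < x → 0 ≤ f x ∧ f x ≤ x)
    (hmul_a : ∀ x, 0 < x → f (a * x) = a * f x)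
    (hmul_one_sub_a : ∀ x, 0 < x → f ((1 - a) * x) = (1 - a) * f x) (x : ℝ) :
    f (f (-x) + x) = f (-f x) + f x := by
  rcases lt_trichotomy x 0 with hx | rfl | hx
  · have hfx : -f x = a * -x := by rw [hneg x hx.le]; ring
    have hle : f (-x) + x ≤ 0 := by linarith [(hpos (-x) (neg_pos.2 hx)).2]
    rw [hneg _ hle, hfx, hmul_a (-x) (neg_pos.2 hx), hneg x hx.le]
    ring
  · simp [hneg 0 le_rfl]
  · have hfx : f (-x) + x = (1 - a) * x := by rw [hneg (-x) (by linarith)]; ring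
    rw [hfx, hmul_one_sub_a x hx, hneg _ (neg_nonpos.2 (hpos x hx).1)]
    ring

theorem abs_le_abs_of_bowtie {f : ℝ → ℝ} (hf : ∀ x, min x 0 ≤ f x ∧ f x ≤ max x 0) (x : ℝ) :
    |f x| ≤ |x| := by
  obtain ⟨h₁, h₂⟩ := hf x
  rcases le_total x 0 with hx | hx
  · rw [min_eq_left hx] at h₁
    rw [max_eq_right hx] at h₂
    rw [abs_of_nonpos hx, abs_le]
    constructor <;> linarith
  · rw [min_eq_right hx] at h₁
    rw [max_eq_left hx] at h₂
    rwa [abs_of_nonneg h₁, abs_of_nonneg hx]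

theorem continuous_of_bowtie {f : ℝ → ℝ} (hf : ∀ x, min x 0 ≤ f x ∧ f x ≤ max x 0)
    (hcont : ∀ x ≠ 0, ContinuousAt f x) : Continuous f := by
  refine continuous_iff_continuousAt.2 fun x => ?_
  rcases eq_or_ne x 0 with rfl | hx
  · have hf0 : f 0 = 0 := by simpa using abs_le_abs_of_bowtie hf 0
    rw [ContinuousAt, hf0]
    exact squeeze_zero_norm (abs_le_abs_of_bowtie hf) tendsto_norm_zero
  · exact hcont x hx

noncomputable def logPeriodicProfile (L x : ℝ) : ℝ :=
  (2 + sin (2 * π * log x / L)) / 4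

namespace logPeriodicProfile

variable {L : ℝ}

theorem mem_Icc (L x : ℝ) : logPeriodicProfile L x ∈ Icc (1 / 4) (3 / 4) := by
  unfold logPeriodicProfile
  constructor <;> linarith [neg_one_le_sin (2 * π * log x / L), sin_le_one (2 * π * log x / L)]

theorem map_mul_of_log_eq_int_mul (hL : L ≠ 0) {k : ℝ} (hk : 0 < k) {j : ℤ}
    (hlog : log k = j * L) {x : ℝ} (hx : 0 < x) :
    logPeriodicProfile L (k * x) = logPeriodicProfile L x := by
  have harg : 2 * π * log (k * x) / L = 2 * π * log x / L + j * (2 * π) := by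
    rw [log_mul hk.ne' hx.ne', hlog]
    field_simp
    ring
  rw [logPeriodicProfile, harg, sin_add_int_mul_two_pi, logPeriodicProfile]

theorem apply_one (L : ℝ) : logPeriodicProfile L 1 = 1 / 2 := by
  norm_num [logPeriodicProfile]

theorem apply_exp_div_four (hL : L ≠ 0) : logPeriodicProfile L (exp (L / 4)) = 3 / 4 := by
  have harg : 2 * π * log (exp (L / 4)) / L = π / 2 := by
    rw [log_exp]
    field_simp
    ring
  rw [logPeriodicProfile, harg, sin_pi_div_two]
  norm_num

theorem continuousAt {x : ℝ} (hx : x ≠ 0) : ContinuousAt (logPeriodicProfile L) x := by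
  unfold logPeriodicProfile
  fun_prop (disch := exact hx)

end logPeriodicProfile

noncomputable def bowtieExample (a L x : ℝ) : ℝ :=
  if x ≤ 0 then a * x else x * logPeriodicProfile L x

namespace bowtieExample

variable {a L : ℝ}

theorem of_nonpos {x : ℝ} (hx : x ≤ 0) : bowtieExample a L x = a * x := if_pos hx

theorem of_pos {x : ℝ} (hx : 0 < x) : bowtieExample a L x = x * logPeriodicProfile L x :=
  if_neg hx.not_ge

theorem pos_bounds {x : ℝ} (hx : 0 < x) : 0 ≤ bowtieExample a L x ∧ bowtieExample a L x ≤ x := by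
  obtain ⟨h₁, h₂⟩ := logPeriodicProfile.mem_Icc L x
  rw [of_pos hx]
  constructor <;> nlinarith

theorem bowtie (ha₀ : 0 ≤ a) (ha₁ : a ≤ 1) (x : ℝ) :
    min x 0 ≤ bowtieExample a L x ∧ bowtieExample a L x ≤ max x 0 := by
  rcases le_or_gt x 0 with hx | hx
  · rw [of_nonpos hx, min_eq_left hx, max_eq_right hx]
    constructor <;> nlinarith
  · rw [min_eq_right hx.le, max_eq_left hx.le]
    exact pos_bounds hx

theorem map_mul_of_log_eq_int_mul (hL : L ≠ 0) {k : ℝ} (hk : 0 < k) {j : ℤ}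
    (hlog : log k = j * L) {x : ℝ} (hx : 0 < x) :
    bowtieExample a L (k * x) = k * bowtieExample a L x := by
  rw [of_pos hx, of_pos (mul_pos hk hx),
    logPeriodicProfile.map_mul_of_log_eq_int_mul hL hk hlog hx, mul_assoc]

theorem continuousAt {x : ℝ} (hx : x ≠ 0) : ContinuousAt (bowtieExample a L) x := by
  rcases hx.lt_or_gt with hx | hx
  · have hlin : (fun y => a * y) =ᶠ[nhds x] bowtieExample a L :=
      (eventually_lt_nhds hx).mono fun y hy => (of_nonpos hy.le).symm
    exact (continuous_const_mul a).continuousAt.congr hlin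
  · have hprof : (fun y => y * logPeriodicProfile L y) =ᶠ[nhds x] bowtieExample a L :=
      (eventually_gt_nhds hx).mono fun y hy => (of_pos hy).symm
    exact (continuousAt_id.mul (logPeriodicProfile.continuousAt hx.ne')).congr hprof

theorem not_linear_on_nonneg (hL : L ≠ 0) :
    ¬ ∃ b : ℝ, ∀ x : ℝ, 0 ≤ x → bowtieExample a L x = b * x := by
  rintro ⟨b, hb⟩
  have hx₀ : 0 < exp (L / 4) := exp_pos _
  have h₁ := hb 1 zero_le_one
  have h₂ := hb _ hx₀.le
  rw [of_pos one_pos, logPeriodicProfile.apply_one] at h₁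
  rw [of_pos hx₀, logPeriodicProfile.apply_exp_div_four hL] at h₂
  nlinarith

end bowtieExample

theorem stmt16 (a : ℝ) (ha : a ∈ Set.Ioo (0 : ℝ) 1)
    (hrat : ∃ q : ℚ, Real.log a / Real.log (1 - a) = (q : ℝ)) :
    ∃ f : ℝ → ℝ, Continuous f ∧
      (∀ x : ℝ, f (f (-x) + x) = f (-f x) + f x) ∧
      (∀ x : ℝ, min x 0 ≤ f x ∧ f x ≤ max x 0) ∧
      (∀ x : ℝ, x ≤ 0 → f x = a * x) ∧
      ¬ ∃ b : ℝ, ∀ x : ℝ, 0 ≤ x → f x = b * x := by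
  obtain ⟨ha₀, ha₁⟩ := ha
  obtain ⟨q, hq⟩ := hrat
  have hlog_ne : log (1 - a) ≠ 0 := (log_neg (by linarith) (by linarith)).ne
  obtain ⟨L, hL, m, n, hm, hn⟩ := exists_int_mul_eq_of_div_eq_rat hlog_ne q hq
  have hbowtie := bowtieExample.bowtie (L := L) ha₀.le ha₁.le
  refine ⟨bowtieExample a L, continuous_of_bowtie hbowtie fun x hx => bowtieExample.continuousAt hx,
    funEq_of_map_mul_eq (fun x hx => bowtieExample.of_nonpos hx)
      (fun x hx => bowtieExample.pos_bounds hx)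
      (fun x hx => bowtieExample.map_mul_of_log_eq_int_mul hL ha₀ hm hx)
      (fun x hx => bowtieExample.map_mul_of_log_eq_int_mul hL (by linarith) hn hx),
    hbowtie, fun x hx => bowtieExample.of_nonpos hx, bowtieExample.not_linear_on_nonneg hL⟩
end

section
/- Let f : ℝ → ℝ be continuous and λ-homogeneous on [0,∞) (f(λx) = λ f(x) for all x ≥ 0) for both λ = a and λ = 1-a, where a ∈ (0,1) and ln a / ln(1-a) is irrational. Then there exists b ∈ ℝ such that f(x) = b·x for all x ≥ 0. -/
/-!
Along the logarithmic scale, `f(x) = b x` says that `t ↦ f(eᵗ) / eᵗ` is constant, and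
`λ`-homogeneity says exactly that this function has period `log λ`. A continuous function with
the two periods `log a` and `log (1 - a)` is constant on the closure of the subgroup they
generate, which is all of `ℝ` because their ratio is irrational.
-/

open Function Real

theorem Function.Periodic.of_mem_addSubgroupClosure {α β : Type*} [AddGroup α] {f : α → β}
    {s : Set α} (hs : ∀ c ∈ s, Periodic f c) {p : α} (hp : p ∈ AddSubgroup.closure s) :
    Periodic f p := by
  induction hp using AddSubgroup.closure_induction with
  | mem c hc => exact hs c hc
  | zero => exact fun x => by rw [add_zero]
  | add c d _ _ hc hd => exact hc.add_period hd
  | neg c _ hc => exact hc.neg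

theorem Continuous.eq_apply_zero_of_periodic_of_irrational_div {β : Type*} [TopologicalSpace β]
    [T2Space β] {f : ℝ → β} (hf : Continuous f) {p q : ℝ} (hp : Periodic f p)
    (hq : Periodic f q) (hpq : Irrational (p / q)) (x : ℝ) : f x = f 0 := by
  have hperiods : ∀ r ∈ AddSubgroup.closure {p, q}, Periodic f r :=
    fun r => Periodic.of_mem_addSubgroupClosure (by rintro c (rfl | rfl) <;> assumption)
  have hconst : f = fun _ => f 0 :=
    hf.ext_on (dense_addSubgroupClosure_pair_iff.mpr hpq) continuous_const
      fun r hr => by simpa using hperiods r hr 0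
  exact congrFun hconst x

theorem periodic_div_exp_of_homogeneous {f : ℝ → ℝ} {c : ℝ} (hc : 0 < c)
    (hf : ∀ x, 0 < x → f (c * x) = c * f x) :
    Periodic (fun t => f (exp t) / exp t) (log c) := fun t => by
  simp only [exp_add, exp_log hc, mul_comm _ c, hf _ (exp_pos t)]
  exact mul_div_mul_left _ _ hc.ne'

theorem stmt18 (a : ℝ) (ha : a ∈ Set.Ioo (0 : ℝ) 1)
    (hirr : Irrational (Real.log a / Real.log (1 - a)))
    (f : ℝ → ℝ) (hc : Continuous f)
    (h1 : ∀ x : ℝ, 0 ≤ x → f (a * x) = a * f x)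
    (h2 : ∀ x : ℝ, 0 ≤ x → f ((1 - a) * x) = (1 - a) * f x) :
    ∃ b : ℝ, ∀ x : ℝ, 0 ≤ x → f x = b * x := by
  obtain ⟨ha0, ha1⟩ := ha
  have hcont : Continuous fun t => f (exp t) / exp t :=
    (hc.comp continuous_exp).div continuous_exp fun t => (exp_pos t).ne'
  have hconst : ∀ t, f (exp t) / exp t = f 1 := fun t => by
    simpa using hcont.eq_apply_zero_of_periodic_of_irrational_div
      (periodic_div_exp_of_homogeneous ha0 fun x hx => h1 x hx.le)
      (periodic_div_exp_of_homogeneous (sub_pos.mpr ha1) fun x hx => h2 x hx.le) hirr t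
  refine ⟨f 1, fun x hx => ?_⟩
  rcases hx.eq_or_lt with rfl | hx
  · have hf0 : a * f 0 = f 0 := by simpa using (h1 0 le_rfl).symm
    simpa [ha1.ne] using mul_left_eq_self₀.mp hf0
  · rw [← div_eq_iff hx.ne', ← exp_log hx]
    exact hconst (log x)
end

section
/- Let a ∈ (0,1) with ln a / ln(1-a) irrational, and let f : ℝ → ℝ be continuous, satisfy the bow-tie condition min(x,0) ≤ f(x) ≤ max(x,0) for all x, and satisfy f(x) = a·x for all x ≤ 0. Then f satisfies f(f(-x)+x) = f(-f(x)) + f(x) for all x ∈ ℝ if and only if there exists b ∈ [0,1] such that f(x) = b·x for all x ≥ 0. -/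
/-!
For `x ≥ 0` the bow-tie condition puts `f x - x` and `-f x` in `(-∞, 0]`, where `f` is linear, so
the functional equation at `-x` and at `x` reduces to `f (a x) = a f x` and
`f ((1 - a) x) = (1 - a) f x`. Then `t ↦ f (eᵗ) / eᵗ` has the periods `log a` and `log (1 - a)`;
their ratio being irrational, they generate a dense subgroup of `ℝ`, so this continuous function is
constant.
-/

open Function Real

theorem Function.Periodic.eq_apply_zero_of_irrational_div {X : Type*} [TopologicalSpace X]
    [T2Space X] {g : ℝ → X} {p q : ℝ} (hg : Continuous g) (hp : Periodic g p)
    (hq : Periodic g q) (hpq : Irrational (p / q)) (t : ℝ) : g t = g 0 := by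
  have hperiods : ∀ s ∈ AddSubgroup.closure {p, q}, Periodic g s := by
    intro s hs
    induction hs using AddSubgroup.closure_induction with
    | mem s hs =>
      rcases hs with rfl | rfl
      exacts [hp, hq]
    | zero => exact fun x => by rw [add_zero]
    | add s u _ _ hs hu => exact hs.add_period hu
    | neg s _ hs => exact hs.neg
  have hconst := Continuous.ext_on (dense_addSubgroupClosure_pair_iff.2 hpq) hg
    continuous_const fun s hs => by simpa using hperiods s hs 0
  exact congrFun hconst t

theorem apply_eq_apply_one_mul_of_irrational_log_div {f : ℝ → ℝ} {a c : ℝ}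
    (hf : ContinuousOn f (Set.Ioi 0)) (ha : 0 < a) (hc : 0 < c)
    (hac : Irrational (log a / log c))
    (hfa : ∀ x, 0 < x → f (a * x) = a * f x) (hfc : ∀ x, 0 < x → f (c * x) = c * f x)
    {x : ℝ} (hx : 0 < x) : f x = f 1 * x := by
  set g : ℝ → ℝ := fun t => f (exp t) / exp t
  have hg : Continuous g :=
    (hf.comp_continuous continuous_exp exp_pos).div continuous_exp fun t => (exp_pos t).ne'
  have periodic_log {r : ℝ} (hr : 0 < r) (hfr : ∀ x, 0 < x → f (r * x) = r * f x) :
      Periodic g (log r) := fun t => by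
    simp only [g, exp_add, exp_log hr, mul_comm (exp t), hfr _ (exp_pos t)]
    exact mul_div_mul_left _ _ hr.ne'
  have := (periodic_log ha hfa).eq_apply_zero_of_irrational_div hg (periodic_log hc hfc) hac
    (log x)
  simp only [g, exp_log hx, exp_zero, div_one] at this
  rw [← this, div_mul_cancel₀ _ hx.ne']

theorem apply_mul_eq_mul_apply_of_bowTie {f : ℝ → ℝ} {a : ℝ}
    (hbt : ∀ x : ℝ, min x 0 ≤ f x ∧ f x ≤ max x 0) (hneg : ∀ x : ℝ, x ≤ 0 → f x = a * x)
    (hfe : ∀ x : ℝ, f (f (-x) + x) = f (-f x) + f x) {x : ℝ} (hx : 0 ≤ x) :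
    f (a * x) = a * f x := by
  have hfx : f x ≤ x := by simpa [hx] using (hbt x).2
  have h := hfe (-x)
  rw [neg_neg, hneg (-x) (by linarith), hneg (f x + -x) (by linarith), mul_neg, neg_neg] at h
  linarith

theorem apply_one_sub_mul_eq_mul_apply_of_bowTie {f : ℝ → ℝ} {a : ℝ}
    (hbt : ∀ x : ℝ, min x 0 ≤ f x ∧ f x ≤ max x 0) (hneg : ∀ x : ℝ, x ≤ 0 → f x = a * x)
    (hfe : ∀ x : ℝ, f (f (-x) + x) = f (-f x) + f x) {x : ℝ} (hx : 0 ≤ x) :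
    f ((1 - a) * x) = (1 - a) * f x := by
  have hfx : 0 ≤ f x := by simpa [hx] using (hbt x).1
  have h := hfe x
  rw [hneg (-x) (by linarith), hneg (-f x) (by linarith), show a * -x + x = (1 - a) * x by ring]
    at h
  linarith

theorem funEq_of_piecewise_linear {f : ℝ → ℝ} {a b : ℝ} (ha : a ∈ Set.Icc (0 : ℝ) 1)
    (hb : b ∈ Set.Icc (0 : ℝ) 1) (hneg : ∀ x : ℝ, x ≤ 0 → f x = a * x)
    (hpos : ∀ x : ℝ, 0 ≤ x → f x = b * x) (x : ℝ) : f (f (-x) + x) = f (-f x) + f x := by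
  obtain ⟨ha0, ha1⟩ := ha
  obtain ⟨hb0, hb1⟩ := hb
  rcases le_total 0 x with hx | hx
  · rw [hneg (-x) (by linarith), hpos x hx, hneg (-(b * x)) (by nlinarith),
      show a * -x + x = (1 - a) * x by ring, hpos _ (by nlinarith)]
    ring
  · rw [hneg x hx, hpos (-x) (by linarith), show b * -x + x = (1 - b) * x by ring,
      hneg _ (by nlinarith), show -(a * x) = a * -x by ring, hpos _ (by nlinarith)]
    ring

theorem stmt19 (a : ℝ) (ha : a ∈ Set.Ioo (0 : ℝ) 1)
    (hirr : Irrational (Real.log a / Real.log (1 - a)))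
    (f : ℝ → ℝ) (hc : Continuous f)
    (hbt : ∀ x : ℝ, min x 0 ≤ f x ∧ f x ≤ max x 0)
    (hneg : ∀ x : ℝ, x ≤ 0 → f x = a * x) :
    (∀ x : ℝ, f (f (-x) + x) = f (-f x) + f x) ↔
      ∃ b ∈ Set.Icc (0 : ℝ) 1, ∀ x : ℝ, 0 ≤ x → f x = b * x := by
  constructor
  · intro hfe
    refine ⟨f 1, ⟨by simpa using (hbt 1).1, by simpa using (hbt 1).2⟩, fun x hx => ?_⟩
    rcases hx.eq_or_lt with rfl | hx
    · simpa using hneg 0 le_rfl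
    exact apply_eq_apply_one_mul_of_irrational_log_div hc.continuousOn ha.1 (sub_pos.2 ha.2)
      hirr (fun x hx => apply_mul_eq_mul_apply_of_bowTie hbt hneg hfe hx.le)
      (fun x hx => apply_one_sub_mul_eq_mul_apply_of_bowTie hbt hneg hfe hx.le) hx
  · rintro ⟨b, hb, hpos⟩
    exact funEq_of_piecewise_linear (Set.Ioo_subset_Icc_self ha) hb hneg hpos
end
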